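/- arXiv:2204.00233 — 3 statements merged into one kernel-verified Lean document; each statement's English description precedes it below -/
import Mathlib

section
/- For σ = 1, the equation G(z,z) = 0, i.e., (2 + 4z - z^{3/2})/(1+z) = z^{3/2}/(1+z), equivalently 2 + 4z - 2z^{3/2} = 0, has a unique root z = γ** in the interval (4, 5), and this root satisfies 4.86 < γ** < 4.87. -/
lemma rpow32 (z : ℝ) (hz : 0 < z) : z ^ ((3:ℝ)/2) = Real.sqrt (z^3) := by
  rw [show ((3:ℝ)/2) = (3:ℕ) * (1/2 : ℝ) by norm_num, Real.rpow_mul hz.le,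
    Real.rpow_natCast, Real.sqrt_eq_rpow]

lemma key (z : ℝ) (hz : 0 < z) :
    (2 + 4*z - 2 * z ^ ((3:ℝ)/2) = 0 ↔ z^3 = (1+2*z)^2) := by
  rw [rpow32 z hz]
  constructor
  · intro h
    have h1 : Real.sqrt (z^3) = 1 + 2*z := by linarith
    have := Real.sq_sqrt (by positivity : (0:ℝ) ≤ z^3)
    rw [h1] at this
    linarith [this]
  · intro h
    have h1 : Real.sqrt (z^3) = 1 + 2*z := by
      rw [h, Real.sqrt_sq (by linarith)]
    rw [h1]; ring

lemma pmono {a b : ℝ} (ha : 4 ≤ a) (hab : a < b) (hb : b ≤ 5) :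
    a^3 - 4*a^2 - 4*a - 1 < b^3 - 4*b^2 - 4*b - 1 := by
  nlinarith [mul_pos (sub_pos.mpr hab) (show (0:ℝ) < a^2 + a*b + b^2 - 4*(a+b) - 4 by nlinarith)]

/-- unique root γ** of 2 + 4z - 2z^{3/2} = 0 in (4,5), with 4.86 < γ** < 4.87. -/
theorem stmt_2 :
    (∃! z : ℝ, z ∈ Set.Ioo (4:ℝ) 5 ∧ 2 + 4*z - 2 * z ^ ((3:ℝ)/2) = 0) ∧
    (∀ z : ℝ, z ∈ Set.Ioo (4:ℝ) 5 → 2 + 4*z - 2 * z ^ ((3:ℝ)/2) = 0 →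
      4.86 < z ∧ z < 4.87) := by
  set p : ℝ → ℝ := fun z => z^3 - 4*z^2 - 4*z - 1 with hp
  have hcont : ContinuousOn p (Set.Icc (4:ℝ) 5) := by fun_prop
  have hiv := intermediate_value_Ioo (by norm_num : (4:ℝ) ≤ 5) hcont
  have h0 : (0:ℝ) ∈ Set.Ioo (p 4) (p 5) := by
    constructor <;> simp [hp] <;> norm_num
  obtain ⟨c, hc, hpc⟩ := hiv h0
  have hc0 : (0:ℝ) < c := by linarith [hc.1]
  have hroot : 2 + 4*c - 2 * c ^ ((3:ℝ)/2) = 0 := by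
    rw [key c hc0]
    have : c^3 - 4*c^2 - 4*c - 1 = 0 := hpc
    nlinarith [this]
  have hbound : ∀ z : ℝ, z ∈ Set.Ioo (4:ℝ) 5 → 2 + 4*z - 2 * z ^ ((3:ℝ)/2) = 0 →
      4.86 < z ∧ z < 4.87 := by
    intro z hz hzr
    have hz0 : (0:ℝ) < z := by linarith [hz.1]
    have hpz : z^3 = (1+2*z)^2 := (key z hz0).mp hzr
    constructor
    · by_contra h
      push_neg at h
      rcases eq_or_lt_of_le h with h | h
      · nlinarith
      · have := pmono (le_of_lt hz.1) h (by norm_num : (4.86:ℝ) ≤ 5)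
        nlinarith
    · by_contra h
      push_neg at h
      rcases eq_or_lt_of_le h with h | h
      · nlinarith
      · have := pmono (by norm_num : (4:ℝ) ≤ 4.87) h (le_of_lt hz.2)
        nlinarith
  refine ⟨⟨c, ⟨hc, hroot⟩, ?_⟩, hbound⟩
  intro y ⟨hy, hyr⟩
  have hy0 : (0:ℝ) < y := by linarith [hy.1]
  have hpy : y^3 = (1+2*y)^2 := (key y hy0).mp hyr
  have hpc' : c^3 = (1+2*c)^2 := (key c hc0).mp hroot
  by_contra hne
  rcases lt_or_gt_of_ne hne with h | h
  · have := pmono (le_of_lt hy.1) h (le_of_lt hc.2)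
    nlinarith
  · have := pmono (le_of_lt hc.1) h (le_of_lt hy.2)
    nlinarith
end

section
/- For σ = 1 the function h(z) = 2 + 4z - 2z^{3/2} is strictly positive on [0, 4] and strictly decreasing on [4, ∞); in particular G(z,z) > 0 for all 0 < z ≤ 4. -/
lemma rpow32_le (z : ℝ) (h0 : 0 ≤ z) (h4 : z ≤ 4) :
    z ^ ((3:ℝ)/2) ≤ 2 * z := by
  have hsplit : z ^ ((3:ℝ)/2) = z ^ (1:ℝ) * z ^ ((1:ℝ)/2) := by
    rw [← Real.rpow_add' h0 (by norm_num)]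
    norm_num
  have hsqrt : z ^ ((1:ℝ)/2) ≤ 2 := by
    have : z ^ ((1:ℝ)/2) ≤ (4:ℝ) ^ ((1:ℝ)/2) :=
      Real.rpow_le_rpow h0 h4 (by norm_num)
    have h42 : (4:ℝ) ^ ((1:ℝ)/2) = 2 := by
      rw [show (4:ℝ) = 2^(2:ℕ) by norm_num, ← Real.rpow_natCast (2:ℝ) 2,
        ← Real.rpow_mul (by norm_num)]
      norm_num
    linarith [this, h42 ▸ this]
  calc z ^ ((3:ℝ)/2) = z * z ^ ((1:ℝ)/2) := by rw [hsplit, Real.rpow_one]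
    _ ≤ z * 2 := by
        exact mul_le_mul_of_nonneg_left hsqrt h0
    _ = 2 * z := by ring

lemma hpos (z : ℝ) (h0 : 0 ≤ z) (h4 : z ≤ 4) :
    0 < 2 + 4*z - 2 * z ^ ((3:ℝ)/2) := by
  have := rpow32_le z h0 h4
  nlinarith

/-- for σ = 1, h(z) = 2 + 4z - 2z^{3/2} is positive on [0,4] and strictly
decreasing on [4,∞); consequently G(z,z) > 0 for 0 < z ≤ 4. -/
theorem stmt_3 :
    (∀ z ∈ Set.Icc (0:ℝ) 4, 0 < 2 + 4*z - 2 * z ^ ((3:ℝ)/2)) ∧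
    StrictAntiOn (fun z : ℝ => 2 + 4*z - 2 * z ^ ((3:ℝ)/2)) (Set.Ici 4) ∧
    (∀ z : ℝ, 0 < z → z ≤ 4 →
      0 < (2 + 4*z - z ^ ((3:ℝ)/2)) / (1 + z) - z ^ ((3:ℝ)/2) / (1 + z)) := by
  refine ⟨fun z hz => hpos z hz.1 hz.2, ?_, ?_⟩
  · apply strictAntiOn_of_deriv_neg (convex_Ici 4)
    · apply Continuous.continuousOn
      fun_prop (disch := norm_num)
    · intro x hx
      rw [interior_Ici] at hx
      have hx0 : x ≠ 0 := by
        have : (4:ℝ) < x := hx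
        positivity
      have hd : HasDerivAt (fun z : ℝ => 2 + 4*z - 2 * z ^ ((3:ℝ)/2))
          (4 - 2 * ((3:ℝ)/2 * x ^ ((3:ℝ)/2 - 1))) x := by
        have h1 : HasDerivAt (fun z : ℝ => z ^ ((3:ℝ)/2))
            ((3:ℝ)/2 * x ^ ((3:ℝ)/2 - 1)) x := Real.hasDerivAt_rpow_const (Or.inl hx0)
        have h2 : HasDerivAt (fun z : ℝ => 2 + 4*z) 4 x := by
          simpa using ((hasDerivAt_id x).const_mul (4:ℝ)).const_add 2
        exact h2.sub (h1.const_mul 2)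
      rw [hd.deriv]
      have hsqrt : (2:ℝ) < x ^ ((3:ℝ)/2 - 1) := by
        have : (4:ℝ) ^ ((1:ℝ)/2) < x ^ ((1:ℝ)/2) :=
          Real.rpow_lt_rpow (by norm_num) hx (by norm_num)
        have h42 : (4:ℝ) ^ ((1:ℝ)/2) = 2 := by
          rw [show (4:ℝ) = 2^(2:ℕ) by norm_num, ← Real.rpow_natCast (2:ℝ) 2,
            ← Real.rpow_mul (by norm_num)]
          norm_num
        have heq : (3:ℝ)/2 - 1 = 1/2 := by norm_num
        rw [heq]
        linarith [h42 ▸ this]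
      nlinarith
  · intro z hz0 hz4
    have hnum := hpos z hz0.le hz4
    have hden : (0:ℝ) < 1 + z := by linarith
    rw [div_sub_div_same]
    apply div_pos _ hden
    linarith
end

section
/- Let σ ∈ [1/2,1], γ_{j+1} > 0, Δt_{j+1} > 0 and let φ be three times continuously differentiable on [t_{j-1}, t_{j+1}] with t_j = t_{j-1} + Δt_j, t_{j+1} = t_j + Δt_{j+1}, γ_{j+1} = Δt_{j+1}/Δt_j. Then the quadratic Lagrange interpolant Π of φ at the nodes t_{j-1}, t_j, t_{j+1} satisfies Π'(t_{j+σ}) = (1/Δt_{j+1})[ ((1+2σγ_{j+1})/(1+γ_{j+1})) φ(t_{j+1}) - (1+(2σ-1)γ_{j+1}) φ(t_j) + ((2σ-1)γ_{j+1}^2/(1+γ_{j+1})) φ(t_{j-1}) ], where t_{j+σ} = t_j + σ Δt_{j+1}. -/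
/-- derivative of the quadratic Lagrange interpolant of φ at the nodes
t_{j-1}, t_j, t_{j+1}, evaluated at t_{j+σ} = t_j + σ Δt_{j+1}, equals the
variable-step σ-weighted BDF2 formula. -/
theorem stmt_6 (σ Δtj Δtj1 γ tjm tj tj1 : ℝ) (φ : ℝ → ℝ)
    (hσ : σ ∈ Set.Icc (1/2 : ℝ) 1)
    (hΔtj : 0 < Δtj) (hΔtj1 : 0 < Δtj1)
    (htj : tj = tjm + Δtj) (htj1 : tj1 = tj + Δtj1)
    (hγ : γ = Δtj1 / Δtj)
    (hφ : ContDiffOn ℝ 3 φ (Set.Icc tjm tj1))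
    (P : ℝ → ℝ)
    (hP : P = fun t =>
      φ tjm * ((t - tj) * (t - tj1) / ((tjm - tj) * (tjm - tj1)))
      + φ tj * ((t - tjm) * (t - tj1) / ((tj - tjm) * (tj - tj1)))
      + φ tj1 * ((t - tjm) * (t - tj) / ((tj1 - tjm) * (tj1 - tj)))) :
    deriv P (tj + σ * Δtj1)
      = (1 / Δtj1) * ((1 + 2*σ*γ) / (1 + γ) * φ tj1
          - (1 + (2*σ - 1)*γ) * φ tj
          + (2*σ - 1) * γ^2 / (1 + γ) * φ tjm) := by
  set x : ℝ := tj + σ * Δtj1 with hx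
  have hD : HasDerivAt P
      (φ tjm * (((x - tj) + (x - tj1)) / ((tjm - tj) * (tjm - tj1)))
      + φ tj * (((x - tjm) + (x - tj1)) / ((tj - tjm) * (tj - tj1)))
      + φ tj1 * (((x - tjm) + (x - tj)) / ((tj1 - tjm) * (tj1 - tj)))) x := by
    rw [hP]
    have h1 : HasDerivAt (fun t : ℝ => (t - tj) * (t - tj1))
        (1 * (x - tj1) + (x - tj) * 1) x := by
      simpa using (((hasDerivAt_id x).sub_const tj).fun_mul ((hasDerivAt_id x).sub_const tj1))
    have h2 : HasDerivAt (fun t : ℝ => (t - tjm) * (t - tj1))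
        (1 * (x - tj1) + (x - tjm) * 1) x := by
      simpa using (((hasDerivAt_id x).sub_const tjm).fun_mul ((hasDerivAt_id x).sub_const tj1))
    have h3 : HasDerivAt (fun t : ℝ => (t - tjm) * (t - tj))
        (1 * (x - tj) + (x - tjm) * 1) x := by
      simpa using (((hasDerivAt_id x).sub_const tjm).fun_mul ((hasDerivAt_id x).sub_const tj))
    have := (((h1.div_const ((tjm - tj) * (tjm - tj1))).const_mul (φ tjm)).fun_add
        ((h2.div_const ((tj - tjm) * (tj - tj1))).const_mul (φ tj))).fun_add
        ((h3.div_const ((tj1 - tjm) * (tj1 - tj))).const_mul (φ tj1))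
    exact this.congr_deriv (by ring)
  rw [hD.deriv]
  have hΔ : (0:ℝ) < Δtj + Δtj1 := by linarith
  have d1 : (tjm - tj) * (tjm - tj1) = Δtj * (Δtj + Δtj1) := by rw [htj1, htj]; ring
  have d2 : (tj - tjm) * (tj - tj1) = -(Δtj * Δtj1) := by rw [htj1, htj]; ring
  have d3 : (tj1 - tjm) * (tj1 - tj) = (Δtj + Δtj1) * Δtj1 := by rw [htj1, htj]; ring
  subst hγ
  rw [d1, d2, d3, hx, htj1, htj]
  rw [div_neg]
  field_simp [hΔtj.ne', hΔtj1.ne', hΔ.ne']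
  ring
end
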